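/- Let A be an m×n real matrix whose rows a₁ᵀ,…,aₘᵀ are linearly independent (A has full row rank), and let b ∈ ℝᵐ. Let G be a connected undirected simple graph on m vertices with Laplacian L, let Pᵢ = I − aᵢaᵢᵀ/(aᵢᵀaᵢ) for i = 1,…,m, let P = diag(P₁,…,Pₘ) be the mn×mn block-diagonal matrix and L̄ = L ⊗ Iₙ. Then for every initial vector 𝒳₀ = (x₁(0),…,xₘ(0)) ∈ (ℝⁿ)ᵐ with aᵢᵀxᵢ(0) = bᵢ for all i, there exist x ∈ ℝⁿ with Ax = b and constants C ≥ 0, c > 0 such that for all t ≥ 0, ‖exp(−t·P L̄)·𝒳₀ − (x,x,…,x)‖ ≤ C·exp(−c·t). -/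

import Mathlib

open Matrix
open scoped Kronecker

/-- The orthogonal projection `Pᵢ = I - aᵢaᵢᵀ/(aᵢᵀaᵢ)` onto the hyperplane `{z : aᵢᵀz = 0}`. -/
noncomputable def projMat {n : ℕ} (a : Fin n → ℝ) : Matrix (Fin n) (Fin n) ℝ :=
  1 - (a ⬝ᵥ a)⁻¹ • vecMulVec a a

/-- The block-diagonal matrix `P = diag(P₁,…,Pₘ)`, acting on `(ℝⁿ)ᵐ ≅ ℝ^{mn}`
(indexed by pairs `(block, coordinate)`). -/
noncomputable def blockP {m n : ℕ} (a : Fin m → Fin n → ℝ) :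
    Matrix (Fin m × Fin n) (Fin m × Fin n) ℝ :=
  Matrix.of fun p q => if p.1 = q.1 then projMat (a p.1) p.2 q.2 else 0

/-! Split `𝒳₀ = Y + (x,…,x)`, where `Ax = b` and `x` is chosen (using that `AAᵀ` is invertible)
so that `∑ᵢ xᵢ(0) - m x` lies in the row space of `A`. The consensus vector is fixed by the flow,
and as `PY = Y` with `P` an idempotent, `exp(-t P L̄) Y = exp(-t P L̄ P) Y`. Since `P L̄ P` is
positive semidefinite, the flow along `Y` decays at the rate of its least positive eigenvalue as
soon as `Y` is orthogonal to its kernel. A kernel vector `Z` has `L̄ P Z = 0`, so by connectedness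
`P Z = (z,…,z)` with `Az = 0`, and `Z ⬝ Y = z ⬝ ∑ᵢ Yᵢ = 0` because `∑ᵢ Yᵢ` lies in the row space
of `A`. -/

open NormedSpace

theorem exists_pos_forall_le_of_pos {ι : Type*} [Fintype ι] (f : ι → ℝ) :
    ∃ c, 0 < c ∧ ∀ i, 0 < f i → c ≤ f i := by
  classical
  let s := insert 1 ((Finset.univ.filter (0 < f ·)).image f)
  refine ⟨s.min' (Finset.insert_nonempty _ _), ?_, fun i hi => s.min'_le _ ?_⟩
  swap
  · simpa [s] using Or.inr ⟨i, hi, rfl⟩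
  rw [Finset.lt_min'_iff]
  simp only [s, Finset.mem_insert, Finset.mem_image, Finset.mem_filter]
  rintro y (rfl | ⟨i, ⟨-, hi⟩, rfl⟩)
  exacts [one_pos, hi]

namespace Matrix

section Exponential

variable {ι : Type*} [Fintype ι] [DecidableEq ι]

open scoped Norms.Operator in
theorem exp_mulVec_of_mulVec_eq_smul {A : Matrix ι ι ℝ} {v : ι → ℝ} {μ : ℝ}
    (h : A *ᵥ v = μ • v) : exp A *ᵥ v = Real.exp μ • v := by
  have hpow : ∀ k : ℕ, A ^ k *ᵥ v = μ ^ k • v := by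
    intro k
    induction k with
    | zero => simp
    | succ k ih => rw [pow_succ', ← mulVec_mulVec, ih, mulVec_smul, h, smul_smul, pow_succ]
  have hseries := (exp_series_hasSum_exp' (𝕂 := ℝ) A).map (mulVec.addMonoidHomLeft v)
    (continuous_id.matrix_mulVec continuous_const)
  refine hseries.unique ?_
  rw [Real.exp_eq_exp_ℝ]
  convert (exp_series_hasSum_exp' (𝕂 := ℝ) μ).smul_const v using 1
  ext k : 1
  simp [mulVec.addMonoidHomLeft, smul_mulVec, hpow, smul_smul]

open scoped Norms.Operator in
theorem exp_smul_mul_mulVec_of_isIdempotentElem {P L : Matrix ι ι ℝ} (hP : IsIdempotentElem P)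
    (s : ℝ) {Y : ι → ℝ} (hY : P *ᵥ Y = Y) :
    exp (s • (P * L)) *ᵥ Y = exp (s • (P * L * P)) *ᵥ Y := by
  have hsemiconj : SemiconjBy P (s • (P * L * P)) (s • (P * L)) := by
    simp only [SemiconjBy, mul_smul_comm, smul_mul_assoc, ← mul_assoc, hP.eq]
  have hcomm : Commute P (s • (P * L * P)) := by
    simp only [Commute, SemiconjBy, mul_smul_comm, smul_mul_assoc, ← mul_assoc, hP.eq]
    rw [mul_assoc _ P P, hP.eq]
  have hexp_semiconj : P * exp (s • (P * L * P)) = exp (s • (P * L)) * P :=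
    hsemiconj.exp_right
  have hexp_comm : P * exp (s • (P * L * P)) = exp (s • (P * L * P)) * P := hcomm.exp_right
  rw [← hY, mulVec_mulVec, mulVec_mulVec, ← hexp_semiconj, hexp_comm]

theorem IsHermitian.eq_sum_eigenvectorBasis {S : Matrix ι ι ℝ} (hS : S.IsHermitian) (Y : ι → ℝ) :
    Y = ∑ i, (⇑(hS.eigenvectorBasis i) ⬝ᵥ Y) • ⇑(hS.eigenvectorBasis i) := by
  have h := congrArg WithLp.ofLp ((hS.eigenvectorBasis).sum_repr' (WithLp.toLp 2 Y))
  simp only [EuclideanSpace.inner_eq_star_dotProduct, star_trivial, WithLp.ofLp_sum,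
    WithLp.ofLp_smul] at h
  simp only [dotProduct_comm _ Y]
  exact h.symm

theorem IsHermitian.exp_smul_mulVec_eq_sum {S : Matrix ι ι ℝ} (hS : S.IsHermitian) (s : ℝ)
    (Y : ι → ℝ) :
    NormedSpace.exp (s • S) *ᵥ Y = ∑ i, (Real.exp (s * hS.eigenvalues i) *
      (⇑(hS.eigenvectorBasis i) ⬝ᵥ Y)) • ⇑(hS.eigenvectorBasis i) := by
  conv_lhs => rw [hS.eq_sum_eigenvectorBasis Y]
  rw [mulVec_sum]
  refine Finset.sum_congr rfl fun i _ => ?_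
  rw [mulVec_smul, exp_mulVec_of_mulVec_eq_smul (μ := s * hS.eigenvalues i)
    (by rw [smul_mulVec, hS.mulVec_eigenvectorBasis, smul_smul]), smul_smul, mul_comm]

theorem PosSemidef.exists_norm_exp_neg_smul_mulVec_le {S : Matrix ι ι ℝ} (hS : S.PosSemidef)
    {Y : ι → ℝ} (hY : ∀ Z, S *ᵥ Z = 0 → Z ⬝ᵥ Y = 0) :
    ∃ C c : ℝ, 0 ≤ C ∧ 0 < c ∧ ∀ t : ℝ, 0 ≤ t →
      ‖exp ((-t) • S) *ᵥ Y‖ ≤ C * Real.exp (-c * t) := by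
  have hH : S.IsHermitian := hS.isHermitian
  set u := fun i => ⇑(hH.eigenvectorBasis i)
  set ev := hH.eigenvalues
  obtain ⟨c, hc, hc_le⟩ := exists_pos_forall_le_of_pos ev
  refine ⟨∑ i, |u i ⬝ᵥ Y| * ‖u i‖, c, by positivity, hc, fun t ht => ?_⟩
  have hterm : ∀ i, ‖(Real.exp (-t * ev i) * (u i ⬝ᵥ Y)) • u i‖
      ≤ |u i ⬝ᵥ Y| * ‖u i‖ * Real.exp (-c * t) := by
    intro i
    rcases (hS.eigenvalues_nonneg i).eq_or_lt with hzero | hpos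
    · have : u i ⬝ᵥ Y = 0 :=
        hY _ (by rw [hH.mulVec_eigenvectorBasis, ← hzero, zero_smul])
      simp [this]
    · have hexp : Real.exp (-t * ev i) ≤ Real.exp (-c * t) :=
        Real.exp_le_exp.2 (by nlinarith [hc_le i hpos])
      rw [norm_smul, norm_mul, Real.norm_of_nonneg (Real.exp_pos _).le, Real.norm_eq_abs]
      calc Real.exp (-t * ev i) * |u i ⬝ᵥ Y| * ‖u i‖
          ≤ Real.exp (-c * t) * |u i ⬝ᵥ Y| * ‖u i‖ := by gcongr
        _ = |u i ⬝ᵥ Y| * ‖u i‖ * Real.exp (-c * t) := by ring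
  rw [hH.exp_smul_mulVec_eq_sum, Finset.sum_mul]
  exact (norm_sum_le _ _).trans (Finset.sum_le_sum fun i _ => hterm i)

end Exponential

theorem kronecker_one_mulVec_apply {R V ι : Type*} [CommSemiring R] [Fintype V] [Fintype ι]
    [DecidableEq ι] (L : Matrix V V R) (w : V × ι → R) (i : V) (k : ι) :
    ((L ⊗ₖ (1 : Matrix ι ι R)) *ᵥ w) (i, k) = (L *ᵥ fun j => w (j, k)) i := by
  simp only [mulVec, dotProduct, kroneckerMap_apply, one_apply, mul_ite, mul_one, mul_zero,
    ite_mul, zero_mul, Fintype.sum_prod_type, Finset.sum_ite_eq, Finset.mem_univ, ↓reduceIte]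

open scoped ComplexOrder in
theorem PosSemidef.mulVec_mulVec_eq_zero_of_conjTranspose_mul_mul {ι 𝕜 : Type*} [Fintype ι]
    [RCLike 𝕜] {L P : Matrix ι ι 𝕜} (hL : L.PosSemidef) {Z : ι → 𝕜}
    (h : (Pᴴ * L * P) *ᵥ Z = 0) : L *ᵥ (P *ᵥ Z) = 0 := by
  rw [← hL.dotProduct_mulVec_zero_iff, star_mulVec, ← dotProduct_mulVec, mulVec_mulVec,
    mulVec_mulVec, h, dotProduct_zero]

theorem exists_mulVec_eq_and_sub_smul_mem_span {m n : Type*} [Fintype m] [DecidableEq m]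
    [Fintype n] {A : Matrix m n ℝ} (hA : LinearIndependent ℝ A.row) (b : m → ℝ) (v : n → ℝ)
    {c : ℝ} (hc : c ≠ 0) :
    ∃ x, A *ᵥ x = b ∧ v - c • x ∈ Submodule.span ℝ (Set.range A.row) := by
  have hunit : IsUnit (A * Aᵀ) := by
    simpa using (PosDef.mul_conjTranspose_self A (vecMul_injective_iff.2 hA)).isUnit
  obtain ⟨μ, hμ⟩ := mulVec_surjective_iff_isUnit.2 hunit (A *ᵥ v - c • b)
  refine ⟨c⁻¹ • (v - μ ᵥ* A), ?_, ?_⟩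
  · rw [mulVec_smul, mulVec_sub, ← mulVec_transpose, mulVec_mulVec, hμ, sub_sub_cancel,
      smul_smul, inv_mul_cancel₀ hc, one_smul]
  · rw [smul_smul, mul_inv_cancel₀ hc, one_smul, sub_sub_cancel, vecMul_eq_sum]
    exact Submodule.sum_mem _ fun i _ => Submodule.smul_mem _ _ (Submodule.subset_span ⟨i, rfl⟩)

end Matrix

theorem SimpleGraph.Connected.lapMatrix_kronecker_one_mulVec_eq_zero_iff {V ι : Type*}
    [Fintype V] [DecidableEq V] {G : SimpleGraph V} [DecidableRel G.Adj] [Fintype ι]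
    [DecidableEq ι] (hG : G.Connected) (w : V × ι → ℝ) :
    (G.lapMatrix ℝ ⊗ₖ (1 : Matrix ι ι ℝ)) *ᵥ w = 0 ↔ ∃ z : ι → ℝ, w = fun p => z p.2 := by
  constructor
  · intro h
    obtain ⟨v₀⟩ := hG.nonempty
    refine ⟨fun k => w (v₀, k), funext fun ⟨i, k⟩ => ?_⟩
    have hcol : G.lapMatrix ℝ *ᵥ (fun j => w (j, k)) = 0 :=
      funext fun i => by rw [← kronecker_one_mulVec_apply, h, Pi.zero_apply, Pi.zero_apply]
    exact G.lapMatrix_mulVec_eq_zero_iff_forall_reachable.1 hcol i v₀ (hG.preconnected i v₀)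
  · rintro ⟨z, rfl⟩
    ext ⟨i, k⟩
    rw [kronecker_one_mulVec_apply]
    simp only [lapMatrix_mulVec_apply, Finset.sum_const, card_neighborFinset_eq_degree,
      nsmul_eq_mul, sub_self, Pi.zero_apply]

section Projection

variable {m n : ℕ}

theorem projMat_mulVec (a y : Fin n → ℝ) :
    projMat a *ᵥ y = y - ((a ⬝ᵥ a)⁻¹ * (a ⬝ᵥ y)) • a := by
  rw [projMat, sub_mulVec, one_mulVec, smul_mulVec, vecMulVec_mulVec, op_smul_eq_smul, smul_smul]

theorem dotProduct_projMat_mulVec {a : Fin n → ℝ} (ha : a ≠ 0) (y : Fin n → ℝ) :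
    a ⬝ᵥ (projMat a *ᵥ y) = 0 := by
  have haa : a ⬝ᵥ a ≠ 0 := by simpa [dotProduct_self_eq_zero] using ha
  rw [projMat_mulVec, dotProduct_sub, dotProduct_smul, smul_eq_mul, mul_comm _ (a ⬝ᵥ a),
    mul_inv_cancel_left₀ haa, sub_self]

theorem projMat_mulVec_eq_self_iff {a : Fin n → ℝ} (ha : a ≠ 0) {y : Fin n → ℝ} :
    projMat a *ᵥ y = y ↔ a ⬝ᵥ y = 0 := by
  refine ⟨fun h => h ▸ dotProduct_projMat_mulVec ha y, fun h => ?_⟩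
  rw [projMat_mulVec, h, mul_zero, zero_smul, sub_zero]

theorem isHermitian_projMat (a : Fin n → ℝ) : (projMat a).IsHermitian := by
  simp only [IsHermitian, projMat, conjTranspose_eq_transpose_of_trivial, transpose_sub,
    transpose_one, transpose_smul, transpose_vecMulVec]

theorem blockP_mulVec_apply (a : Fin m → Fin n → ℝ) (v : Fin m × Fin n → ℝ) (i : Fin m)
    (k : Fin n) : (blockP a *ᵥ v) (i, k) = (projMat (a i) *ᵥ fun l => v (i, l)) k := by
  simp only [mulVec, dotProduct, blockP, of_apply, ite_mul, zero_mul, Fintype.sum_prod_type,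
    Finset.sum_ite_irrel, Finset.sum_const_zero, Finset.sum_ite_eq, Finset.mem_univ, ↓reduceIte]

theorem dotProduct_blockP_mulVec {a : Fin m → Fin n → ℝ} (ha : ∀ i, a i ≠ 0)
    (v : Fin m × Fin n → ℝ) (i : Fin m) : a i ⬝ᵥ (fun k => (blockP a *ᵥ v) (i, k)) = 0 := by
  simp only [blockP_mulVec_apply]
  exact dotProduct_projMat_mulVec (ha i) _

theorem blockP_mulVec_eq_self_iff {a : Fin m → Fin n → ℝ} (ha : ∀ i, a i ≠ 0)
    {v : Fin m × Fin n → ℝ} : blockP a *ᵥ v = v ↔ ∀ i, a i ⬝ᵥ (fun k => v (i, k)) = 0 := by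
  simp only [← projMat_mulVec_eq_self_iff (ha _), funext_iff, Prod.forall, blockP_mulVec_apply]

theorem isIdempotentElem_blockP {a : Fin m → Fin n → ℝ} (ha : ∀ i, a i ≠ 0) :
    IsIdempotentElem (blockP a) :=
  ext_of_mulVec_single fun _ => by
    rw [← mulVec_mulVec, (blockP_mulVec_eq_self_iff ha).2 (dotProduct_blockP_mulVec ha _)]

theorem isHermitian_blockP (a : Fin m → Fin n → ℝ) : (blockP a).IsHermitian := by
  ext ⟨i, k⟩ ⟨j, l⟩
  by_cases h : i = j
  · subst h
    simpa [blockP] using congrFun₂ (isHermitian_projMat (a i)) k l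
  · simp [blockP, h, Ne.symm h]

end Projection

theorem dotProduct_eq_zero_of_blockP_mul_mul_blockP_mulVec_eq_zero {m n : ℕ}
    {a : Fin m → Fin n → ℝ} (ha : ∀ i, a i ≠ 0) {G : SimpleGraph (Fin m)} [DecidableRel G.Adj]
    (hG : G.Connected) {Y : Fin m × Fin n → ℝ} (hPY : blockP a *ᵥ Y = Y)
    (hY : ∑ i, (fun k => Y (i, k)) ∈ Submodule.span ℝ (Set.range a)) {Z : Fin m × Fin n → ℝ}
    (hZ : (blockP a * (G.lapMatrix ℝ ⊗ₖ (1 : Matrix (Fin n) (Fin n) ℝ)) * blockP a) *ᵥ Z = 0) :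
    Z ⬝ᵥ Y = 0 := by
  have hP := isHermitian_blockP a
  have hL : (G.lapMatrix ℝ ⊗ₖ (1 : Matrix (Fin n) (Fin n) ℝ)).PosSemidef :=
    (SimpleGraph.posSemidef_lapMatrix ℝ G).kronecker .one
  obtain ⟨z, hz⟩ := (hG.lapMatrix_kronecker_one_mulVec_eq_zero_iff _).1
    (hL.mulVec_mulVec_eq_zero_of_conjTranspose_mul_mul (by rwa [hP.eq]))
  have hza : ∀ i, a i ⬝ᵥ z = 0 := fun i => by simpa [hz] using dotProduct_blockP_mulVec ha Z i
  obtain ⟨μ, hμ⟩ := (Submodule.mem_span_range_iff_exists_fun ℝ).1 hY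
  calc Z ⬝ᵥ Y = (blockP a *ᵥ Z) ⬝ᵥ Y := by
        rw [← hPY, dotProduct_mulVec, ← mulVec_transpose, ← conjTranspose_eq_transpose_of_trivial,
          hP.eq, hPY]
    _ = z ⬝ᵥ ∑ i, fun k => Y (i, k) := by
        rw [hz]
        simp [dotProduct, Fintype.sum_prod_type, Finset.mul_sum, Finset.sum_comm (γ := Fin m)]
    _ = 0 := by
        rw [← hμ, dotProduct_sum]
        exact Finset.sum_eq_zero fun i _ => by rw [dotProduct_smul, dotProduct_comm, hza, smul_zero]

/-- For an `m × n` matrix `A` of full row rank, a connected graph `G` on `m`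
vertices, and any initial vector `𝒳₀` with `aᵢᵀxᵢ(0) = bᵢ` for all `i`, the solution
`𝒳(t) = exp(-t·P L̄)·𝒳₀` of the flow `𝒳̇ = -P L̄ 𝒳` converges exponentially fast to `(x,…,x)`
for some solution `x` of `Ax = b`. -/
theorem flow_converges_exponentially_full_row_rank
    {m n : ℕ} (A : Matrix (Fin m) (Fin n) ℝ)
    (hA : LinearIndependent ℝ (fun i => A i)) (b : Fin m → ℝ)
    (G : SimpleGraph (Fin m)) [DecidableRel G.Adj] (hG : G.Connected)
    (X0 : Fin m × Fin n → ℝ)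
    (hX0 : ∀ i, A i ⬝ᵥ (fun k => X0 (i, k)) = b i) :
    ∃ x : Fin n → ℝ, A *ᵥ x = b ∧
      ∃ C c : ℝ, 0 ≤ C ∧ 0 < c ∧ ∀ t : ℝ, 0 ≤ t →
        ‖(NormedSpace.exp
              ((-t) • (blockP (fun i => A i) * (G.lapMatrix ℝ ⊗ₖ (1 : Matrix (Fin n) (Fin n) ℝ))))
            *ᵥ X0)
          - (fun p => x p.2)‖ ≤ C * Real.exp (-c * t) := by
  set P := blockP (fun i => A i)
  set Lbar := G.lapMatrix ℝ ⊗ₖ (1 : Matrix (Fin n) (Fin n) ℝ)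
  have ha : ∀ i, A i ≠ 0 := hA.ne_zero
  have hm : (m : ℝ) ≠ 0 := Nat.cast_ne_zero.2 (Fin.pos_iff_nonempty.2 hG.nonempty).ne'
  obtain ⟨x, hAx, hx⟩ :=
    exists_mulVec_eq_and_sub_smul_mem_span hA b (∑ i, fun k => X0 (i, k)) hm
  set xbar : Fin m × Fin n → ℝ := fun p => x p.2
  set Y := X0 - xbar
  have hPY : P *ᵥ Y = Y := (blockP_mulVec_eq_self_iff ha).2 fun i => by
    change A i ⬝ᵥ ((fun k => X0 (i, k)) - x) = 0
    rw [dotProduct_sub, hX0, ← hAx]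
    exact sub_self _
  have hYsum : ∑ i, (fun k => Y (i, k)) = (∑ i, fun k => X0 (i, k)) - (m : ℝ) • x := by
    ext k
    simp [Y, xbar, Finset.sum_sub_distrib]
  have hS : (P * Lbar * P).PosSemidef := by
    have := ((SimpleGraph.posSemidef_lapMatrix ℝ G).kronecker .one).conjTranspose_mul_mul_same P
    rwa [(isHermitian_blockP _).eq] at this
  obtain ⟨C, c, hC, hc, hdecay⟩ := hS.exists_norm_exp_neg_smul_mulVec_le fun Z hZ =>
    dotProduct_eq_zero_of_blockP_mul_mul_blockP_mulVec_eq_zero ha hG hPY (hYsum ▸ hx) hZ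
  refine ⟨x, hAx, C, c, hC, hc, fun t ht => ?_⟩
  have hxbar : exp ((-t) • (P * Lbar)) *ᵥ xbar = xbar := by
    have : ((-t) • (P * Lbar)) *ᵥ xbar = (0 : ℝ) • xbar := by
      rw [smul_mulVec, ← mulVec_mulVec,
        (hG.lapMatrix_kronecker_one_mulVec_eq_zero_iff xbar).2 ⟨x, rfl⟩, mulVec_zero, smul_zero,
        zero_smul]
    rw [exp_mulVec_of_mulVec_eq_smul this, Real.exp_zero, one_smul]
  rw [← sub_add_cancel X0 xbar, mulVec_add, hxbar, add_sub_cancel_right,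
    exp_smul_mul_mulVec_of_isIdempotentElem (isIdempotentElem_blockP ha) _ hPY]
  exact hdecay t ht
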